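/- Let 2 ≤ k ≤ n and λ ∈ Γ_k = {λ ∈ ℝⁿ : σ_1(λ) > 0, …, σ_k(λ) > 0}. Then the Maclaurin inequality (σ_{k-1}(λ)/C(n,k−1))^{1/(k−1)} ≥ (σ_k(λ)/C(n,k))^{1/k} holds, where C(n,m) denotes the binomial coefficient n choose m. -/

import Mathlib

/-!
Write `E_j = σ_j / C(n, j)` for the normalised elementary symmetric means of a real multiset of
size `n`. Differentiating `∏ (X - λ_i)` keeps `E_0, …, E_{n-1}` unchanged, and by Rolle's theorem
the derivative is again real-rooted; passing to `λ⁻¹` reverses the sequence `E_j` up to the factor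
`∏ λ_i` (when some `λ_i = 0`, `E_n = 0` and the top inequality is trivial). These two moves reduce Newton's inequality `E_m E_{m+2} ≤ E_{m+1}²` to AM-GM for two
numbers. On `Γ_k` the means `E_1, …, E_k` are positive, so Newton's inequalities telescope into
`E_{m+1}^m ≤ E_m^{m+1}` for `m < k`.
-/

def esymm (n k : ℕ) (x : Fin n → ℝ) : ℝ :=
  ∑ s ∈ Finset.powersetCard k (Finset.univ : Finset (Fin n)), ∏ i ∈ s, x i

/-- `σ_m(λ|λ_i)`: the m-th elementary symmetric polynomial of the (n−1)-tuple
obtained from `x` by deleting the entry `x i`. -/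
def esymmDel (n m : ℕ) (x : Fin n → ℝ) (i : Fin n) : ℝ :=
  ∑ s ∈ Finset.powersetCard m ((Finset.univ : Finset (Fin n)).erase i), ∏ j ∈ s, x j

open Polynomial

namespace Multiset

section CommSemiring

variable {R : Type*} [CommSemiring R]

theorem esymm_zero (s : Multiset R) : s.esymm 0 = 1 := by
  simp [esymm]

theorem esymm_cons_succ (a : R) (s : Multiset R) (j : ℕ) :
    (a ::ₘ s).esymm (j + 1) = s.esymm (j + 1) + a * s.esymm j := by
  simp [esymm, powersetCard_cons, sum_map_mul_left]

theorem esymm_eq_zero_of_card_lt {s : Multiset R} {j : ℕ} (h : card s < j) : s.esymm j = 0 := by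
  simp [esymm, powersetCard_eq_empty _ h]

theorem esymm_card (s : Multiset R) : s.esymm (card s) = s.prod := by
  simp [esymm, powersetCard_self]

end CommSemiring

theorem prod_mul_esymm_map_inv {K : Type*} [Field K] {s : Multiset K} (hs : 0 ∉ s) {i j : ℕ}
    (hij : i + j = card s) : s.prod * (s.map (·⁻¹)).esymm i = s.esymm j := by
  induction s using Multiset.induction_on generalizing i j with
  | empty => simp_all [esymm]
  | cons a s ih =>
    have ha : a ≠ 0 := fun h => hs (h ▸ mem_cons_self a s)
    have hs' : 0 ∉ s := fun h => hs (mem_cons_of_mem h)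
    rw [card_cons] at hij
    rw [map_cons, prod_cons]
    rcases i with _ | i
    · rw [zero_add, ← card_cons a s] at hij
      rw [esymm_zero, mul_one, hij, esymm_card, prod_cons]
    rcases j with _ | j
    · have hprod := ih hs' (i := i) (j := 0) (by omega)
      rw [esymm_zero] at hprod
      rw [esymm_cons_succ, esymm_eq_zero_of_card_lt (by simp; omega), esymm_zero, zero_add,
        mul_mul_mul_comm, mul_inv_cancel₀ ha, one_mul, hprod]
    · rw [esymm_cons_succ, esymm_cons_succ, ← ih hs' (i := i + 1) (j := j) (by omega),
        ← ih hs' (i := i) (j := j + 1) (by omega)]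
      field_simp
      ring

theorem card_roots_derivative_prod_X_sub_C (s : Multiset ℝ) :
    card (derivative (s.map fun a => X - C a).prod).roots = card s - 1 := by
  have hle := card_roots' (derivative (s.map fun a => X - C a).prod)
  have hge := card_roots_le_derivative (s.map fun a => X - C a).prod
  rw [natDegree_derivative, natDegree_multiset_prod_X_sub_C_eq_card] at hle
  rw [roots_multiset_prod_X_sub_C] at hge
  omega

theorem esymm_roots_derivative_prod_X_sub_C {s : Multiset ℝ} {n j : ℕ} (hs : card s = n + 1)
    (hj : j ≤ n) :
    ((n + 1 : ℕ) : ℝ) * (derivative (s.map fun a => X - C a).prod).roots.esymm j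
      = ((n + 1 - j : ℕ) : ℝ) * s.esymm j := by
  set P : ℝ[X] := (s.map fun a => X - C a).prod
  have hP : P.natDegree = n + 1 := by rw [natDegree_multiset_prod_X_sub_C_eq_card, hs]
  have hlc : P.leadingCoeff = 1 :=
    (monic_multiset_prod_of_monic _ _ fun a _ => monic_X_sub_C a).leadingCoeff
  have hroots : card (derivative P).roots = (derivative P).natDegree := by
    rw [card_roots_derivative_prod_X_sub_C, natDegree_derivative, hP, hs]
  have hvieta := coeff_eq_esymm_roots_of_card hroots (k := n - j)
    (by rw [natDegree_derivative, hP]; omega)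
  rw [coeff_derivative, prod_X_sub_C_coeff s (by omega), leadingCoeff_derivative, hlc,
    natDegree_derivative, hP, hs, show n + 1 - (n - j + 1) = j by omega,
    show n + 1 - 1 - (n - j) = j by omega] at hvieta
  have hsign : (-1 : ℝ) ^ j * (-1) ^ j = 1 := by rw [← mul_pow]; simp
  have hcast : ((n - j : ℕ) : ℝ) + 1 = ((n + 1 - j : ℕ) : ℝ) := by
    rw [show n + 1 - j = n - j + 1 by omega]; push_cast; ring
  rw [hcast] at hvieta
  linear_combination (-(-1 : ℝ) ^ j) * hvieta
    + (((n + 1 - j : ℕ) : ℝ) * s.esymm j - ((n + 1 : ℕ) : ℝ) * (derivative P).roots.esymm j) * hsign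

noncomputable def esymmMean (s : Multiset ℝ) (j : ℕ) : ℝ :=
  s.esymm j / (card s).choose j

theorem esymmMean_zero (s : Multiset ℝ) : s.esymmMean 0 = 1 := by
  simp [esymmMean, esymm_zero]

theorem esymmMean_card (s : Multiset ℝ) : s.esymmMean (card s) = s.prod := by
  simp [esymmMean, esymm_card]

theorem esymmMean_pos {s : Multiset ℝ} {j : ℕ} (hj : j ≤ card s) (hpos : 0 < s.esymm j) :
    0 < s.esymmMean j :=
  div_pos hpos (by exact_mod_cast Nat.choose_pos hj)

theorem esymmMean_roots_derivative_prod_X_sub_C {s : Multiset ℝ} {n j : ℕ}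
    (hs : card s = n + 1) (hj : j ≤ n) :
    (derivative (s.map fun a => X - C a).prod).roots.esymmMean j = s.esymmMean j := by
  have hchoose := congrArg (Nat.cast : ℕ → ℝ) (Nat.choose_mul_succ_eq n j)
  push_cast at hchoose
  have hpos : (0 : ℝ) < n.choose j := by exact_mod_cast Nat.choose_pos hj
  have hpos' : (0 : ℝ) < (n + 1).choose j := by exact_mod_cast Nat.choose_pos (by omega)
  rw [esymmMean, esymmMean, card_roots_derivative_prod_X_sub_C, hs, Nat.add_sub_cancel,
    div_eq_div_iff hpos.ne' hpos'.ne']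
  have hmul := esymm_roots_derivative_prod_X_sub_C hs hj
  push_cast at hmul
  refine mul_left_cancel₀ (n.cast_add_one_ne_zero (R := ℝ)) ?_
  linear_combination ((n + 1).choose j : ℝ) * hmul - s.esymm j * hchoose

theorem exists_card_eq_esymmMean_eq {s : Multiset ℝ} {n : ℕ} (hn : n ≤ card s) :
    ∃ t : Multiset ℝ, card t = n ∧ ∀ j ≤ n, t.esymmMean j = s.esymmMean j := by
  obtain ⟨d, hd⟩ := Nat.exists_eq_add_of_le hn
  clear hn
  induction d generalizing s with
  | zero => exact ⟨s, hd, fun _ _ => rfl⟩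
  | succ d ih =>
    obtain ⟨t, ht, hts⟩ := ih (s := (derivative (s.map fun a => X - C a).prod).roots)
      (by rw [card_roots_derivative_prod_X_sub_C, hd]; rfl)
    exact ⟨t, ht, fun j hj =>
      (hts j hj).trans (esymmMean_roots_derivative_prod_X_sub_C (n := n + d) hd (by omega))⟩

theorem prod_mul_esymmMean_map_inv {s : Multiset ℝ} (hs : 0 ∉ s) {i j : ℕ}
    (hij : i + j = card s) : s.prod * (s.map (·⁻¹)).esymmMean i = s.esymmMean j := by
  rw [esymmMean, esymmMean, card_map, ← hij, Nat.choose_symm_add, ← mul_div_assoc,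
    prod_mul_esymm_map_inv hs hij]

theorem esymmMean_two_le_sq {s : Multiset ℝ} (hs : 2 ≤ card s) :
    s.esymmMean 2 ≤ s.esymmMean 1 ^ 2 := by
  obtain ⟨t, ht, hts⟩ := exists_card_eq_esymmMean_eq hs
  obtain ⟨a, b, rfl⟩ := card_eq_two.mp ht
  rw [← hts 2 le_rfl, ← hts 1 (by norm_num)]
  have hamgm : a * b ≤ ((a + b) / 2) ^ 2 := by linear_combination sq_nonneg (a - b) / 4
  simpa [esymmMean] using hamgm

theorem esymmMean_mul_le_sq_of_card_eq {s : Multiset ℝ} {m : ℕ} (hs : card s = m + 2) :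
    s.esymmMean m * s.esymmMean (m + 2) ≤ s.esymmMean (m + 1) ^ 2 := by
  by_cases h0 : (0 : ℝ) ∈ s
  · rw [← hs, esymmMean_card, prod_eq_zero h0, mul_zero]
    positivity
  have ht : 2 ≤ card (s.map (·⁻¹)) := by simp [hs]
  rw [← prod_mul_esymmMean_map_inv h0 (i := 2) (by omega),
    ← prod_mul_esymmMean_map_inv h0 (i := 0) (by omega),
    ← prod_mul_esymmMean_map_inv h0 (i := 1) (by omega), esymmMean_zero]
  linear_combination mul_le_mul_of_nonneg_left (esymmMean_two_le_sq ht) (sq_nonneg s.prod)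

theorem esymmMean_mul_le_sq {s : Multiset ℝ} {m : ℕ} (hs : m + 2 ≤ card s) :
    s.esymmMean m * s.esymmMean (m + 2) ≤ s.esymmMean (m + 1) ^ 2 := by
  obtain ⟨t, ht, hts⟩ := exists_card_eq_esymmMean_eq hs
  rw [← hts m (by omega), ← hts (m + 1) (by omega), ← hts (m + 2) le_rfl]
  exact esymmMean_mul_le_sq_of_card_eq ht

theorem esymmMean_succ_pow_le {s : Multiset ℝ} {m : ℕ} (hm : m + 1 ≤ card s)
    (hpos : ∀ j, 1 ≤ j → j ≤ m + 1 → 0 < s.esymm j) :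
    s.esymmMean (m + 1) ^ m ≤ s.esymmMean m ^ (m + 1) := by
  induction m with
  | zero => simp [esymmMean_zero]
  | succ m ih =>
    have ha : 0 < s.esymmMean m := by
      rcases Nat.eq_zero_or_pos m with rfl | hm
      · simp [esymmMean_zero]
      · exact esymmMean_pos (by omega) (hpos m hm (by omega))
    have hb := esymmMean_pos (by omega) (hpos (m + 1) (by omega) (by omega))
    have hc := esymmMean_pos hm (hpos (m + 2) (by omega) le_rfl)
    have hchain := ih (by omega) fun j hj hjm => hpos j hj (by omega)
    have hnewton := esymmMean_mul_le_sq (s := s) (m := m) hm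
    refine le_of_mul_le_mul_right ?_ (pow_pos ha (m + 1))
    calc s.esymmMean (m + 2) ^ (m + 1) * s.esymmMean m ^ (m + 1)
        = (s.esymmMean m * s.esymmMean (m + 2)) ^ (m + 1) := by ring
      _ ≤ (s.esymmMean (m + 1) ^ 2) ^ (m + 1) := by gcongr
      _ = s.esymmMean (m + 1) ^ (m + 2) * s.esymmMean (m + 1) ^ m := by ring
      _ ≤ s.esymmMean (m + 1) ^ (m + 2) * s.esymmMean m ^ (m + 1) := by gcongr

end Multiset

theorem Real.rpow_one_div_le_rpow_one_div_of_rpow_le {a b p q : ℝ} (ha : 0 ≤ a) (hb : 0 ≤ b)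
    (hp : 0 < p) (hq : 0 < q) (h : a ^ p ≤ b ^ q) : a ^ (1 / q) ≤ b ^ (1 / p) :=
  calc a ^ (1 / q) = (a ^ p) ^ (1 / (p * q)) := by rw [← Real.rpow_mul ha]; field_simp
    _ ≤ (b ^ q) ^ (1 / (p * q)) := by gcongr
    _ = b ^ (1 / p) := by rw [← Real.rpow_mul hb]; field_simp

/-- the Maclaurin inequality
`(σ_{k-1}(λ)/C(n,k−1))^{1/(k−1)} ≥ (σ_k(λ)/C(n,k))^{1/k}` holds on the Gårding cone `Γ_k`. -/
theorem maclaurin_gardingCone (n k : ℕ) (hk2 : 2 ≤ k) (hkn : k ≤ n) (x : Fin n → ℝ)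
    (hx : ∀ j, 1 ≤ j → j ≤ k → 0 < esymm n j x) :
    (esymm n k x / (n.choose k : ℝ)) ^ ((1 : ℝ) / (k : ℝ))
      ≤ (esymm n (k - 1) x / (n.choose (k - 1) : ℝ)) ^ ((1 : ℝ) / ((k : ℝ) - 1)) := by
  set s : Multiset ℝ := Finset.univ.val.map x
  have hcard : Multiset.card s = n := by simp [s]
  have hesymm (j : ℕ) : s.esymm j = esymm n j x := Finset.esymm_map_val x _ j
  have hmean (j : ℕ) : esymm n j x / n.choose j = s.esymmMean j := by
    rw [Multiset.esymmMean, hesymm, hcard]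
  have hchain := Multiset.esymmMean_succ_pow_le (s := s) (m := k - 1) (by omega)
    fun j hj hjk => hesymm j ▸ hx j hj (by omega)
  rw [Nat.sub_add_cancel (by omega : 1 ≤ k)] at hchain
  rw [hmean, hmean]
  refine Real.rpow_one_div_le_rpow_one_div_of_rpow_le
    (Multiset.esymmMean_pos (by omega) (hesymm k ▸ hx k (by omega) le_rfl)).le
    (Multiset.esymmMean_pos (by omega) (hesymm (k - 1) ▸ hx (k - 1) (by omega) (by omega))).le
    (by rw [sub_pos]; exact_mod_cast hk2) (by positivity) ?_
  rw [← Nat.cast_pred (by omega), Real.rpow_natCast, Real.rpow_natCast]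
  exact hchain
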